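/- Let G be a graph with minimum degree δ(G) ≥ 1. Then γ_SMB(G) = 2 if and only if G has at least two strong support vertices. -/

import Mathlib

/-!
Formalization of the Maker-Breaker domination game (MBD game).

In the MBD game on a graph `G`, Dominator and Staller alternately select
previously unplayed vertices.  Dominator wins when the set of vertices he has
selected is a dominating set of `G`; Staller wins when she has selected a
vertex of every dominating set of `G`, which happens exactly when the closed
neighbourhood of some vertex is entirely contained in her set of selected
vertices.
-/

/-- `D` is a dominating set of `G` (as a finset of vertices). -/
def IsDomSet {V : Type*} (G : SimpleGraph V) (D : Finset V) : Prop :=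
  ∀ v, v ∈ D ∨ ∃ u ∈ D, G.Adj u v

/-- Staller (whose selected vertices form `S`) has won: she owns the whole
closed neighbourhood of some vertex, hence a vertex of every dominating set. -/
def StallerWon {V : Type*} (G : SimpleGraph V) (S : Finset V) : Prop :=
  ∃ v, v ∈ S ∧ ∀ u, G.Adj v u → u ∈ S

section Game

variable {V : Type*} [DecidableEq V]

mutual
  /-- Position with Dominator's vertices `D`, Staller's vertices `S` and
  Dominator to move: Dominator can guarantee to complete a dominating set
  using at most `k` further moves of his own. -/
  inductive DomWinD (G : SimpleGraph V) : Finset V → Finset V → ℕ → Prop where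
    | done (D S : Finset V) (k : ℕ) : IsDomSet G D → DomWinD G D S k
    | step (D S : Finset V) (k : ℕ) (v : V) : v ∉ D → v ∉ S →
        DomWinS G (insert v D) S k → DomWinD G D S (k + 1)

  /-- Position with Dominator's vertices `D`, Staller's vertices `S` and
  Staller to move: Dominator can guarantee to complete a dominating set
  using at most `k` further moves of his own. -/
  inductive DomWinS (G : SimpleGraph V) : Finset V → Finset V → ℕ → Prop where
    | done (D S : Finset V) (k : ℕ) : IsDomSet G D → DomWinS G D S k
    | step (D S : Finset V) (k : ℕ) : (∃ w, w ∉ D ∧ w ∉ S) →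
        (∀ w, w ∉ D → w ∉ S → DomWinD G D (insert w S) k) → DomWinS G D S k
end

mutual
  /-- Position with Dominator's vertices `D`, Staller's vertices `S` and
  Staller to move: Staller can guarantee to claim a whole closed neighbourhood
  using at most `k` further moves of her own. -/
  inductive StalWinS (G : SimpleGraph V) : Finset V → Finset V → ℕ → Prop where
    | done (D S : Finset V) (k : ℕ) : StallerWon G S → StalWinS G D S k
    | step (D S : Finset V) (k : ℕ) (w : V) : w ∉ D → w ∉ S →
        StalWinD G D (insert w S) k → StalWinS G D S (k + 1)

  /-- Position with Dominator's vertices `D`, Staller's vertices `S` and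
  Dominator to move: Staller can guarantee to claim a whole closed
  neighbourhood using at most `k` further moves of her own. -/
  inductive StalWinD (G : SimpleGraph V) : Finset V → Finset V → ℕ → Prop where
    | done (D S : Finset V) (k : ℕ) : StallerWon G S → StalWinD G D S k
    | step (D S : Finset V) (k : ℕ) : (∃ v, v ∉ D ∧ v ∉ S) →
        (∀ v, v ∉ D → v ∉ S → StalWinS G (insert v D) S k) → StalWinD G D S k
end

/-- `γ_MB(G)`: minimum number of Dominator's moves with which he can guarantee
to win the D-game (Dominator moves first); `⊤` if he cannot win it. -/
noncomputable def gammaMB (G : SimpleGraph V) : ℕ∞ :=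
  sInf {k : ℕ∞ | ∃ n : ℕ, k = n ∧ DomWinD G ∅ ∅ n}

/-- `γ_MB'(G)`: minimum number of Dominator's moves with which he can guarantee
to win the S-game (Staller moves first); `⊤` if he cannot win it. -/
noncomputable def gammaMB' (G : SimpleGraph V) : ℕ∞ :=
  sInf {k : ℕ∞ | ∃ n : ℕ, k = n ∧ DomWinS G ∅ ∅ n}

/-- `γ_SMB(G)`: minimum number of Staller's moves with which she can guarantee
to win the D-game (Dominator moves first); `⊤` if she cannot win it. -/
noncomputable def gammaSMB (G : SimpleGraph V) : ℕ∞ :=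
  sInf {k : ℕ∞ | ∃ n : ℕ, k = n ∧ StalWinD G ∅ ∅ n}

/-- `γ_SMB'(G)`: minimum number of Staller's moves with which she can guarantee
to win the S-game (Staller moves first); `⊤` if she cannot win it. -/
noncomputable def gammaSMB' (G : SimpleGraph V) : ℕ∞ :=
  sInf {k : ℕ∞ | ∃ n : ℕ, k = n ∧ StalWinS G ∅ ∅ n}

/-- Outcome `𝒟`: Dominator has a winning strategy no matter who starts. -/
def OutcomeD (G : SimpleGraph V) : Prop :=
  (∃ n, DomWinD G ∅ ∅ n) ∧ (∃ n, DomWinS G ∅ ∅ n)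

/-- Outcome `𝒮`: Staller has a winning strategy no matter who starts. -/
def OutcomeS (G : SimpleGraph V) : Prop :=
  (∃ n, StalWinD G ∅ ∅ n) ∧ (∃ n, StalWinS G ∅ ∅ n)

/-- Outcome `𝒩`: the first player has a winning strategy. -/
def OutcomeN (G : SimpleGraph V) : Prop :=
  (∃ n, DomWinD G ∅ ∅ n) ∧ (∃ n, StalWinS G ∅ ∅ n)

end Game

/-- The corona product `G ⊙ H`: one copy of `G`, a copy of `H` for every
vertex of `G`, and the `i`-th vertex of `G` joined to every vertex of the
`i`-th copy of `H`. -/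
def coronaProd {α β : Type*} (G : SimpleGraph α) (H : SimpleGraph β) :
    SimpleGraph (α ⊕ α × β) where
  Adj x y :=
    match x, y with
    | Sum.inl a, Sum.inl a' => G.Adj a a'
    | Sum.inl a, Sum.inr p => a = p.1
    | Sum.inr p, Sum.inl a => a = p.1
    | Sum.inr p, Sum.inr q => p.1 = q.1 ∧ H.Adj p.2 q.2
  symm := by
    constructor
    rintro (a | p) (a' | q) h
    · exact G.adj_symm h
    · exact h
    · exact h
    · exact ⟨h.1.symm, H.adj_symm h.2⟩
  loopless := by
    constructor
    rintro (a | p) h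
    · exact G.ne_of_adj h rfl
    · exact H.ne_of_adj h.2 rfl

/-- The domination number `γ(G)` of a finite graph. -/
noncomputable def domNumber {V : Type*} [Fintype V] (G : SimpleGraph V) : ℕ :=
  sInf {n : ℕ | ∃ D : Finset V, D.card = n ∧ IsDomSet G D}

/-- `v` is a dominating vertex: it is adjacent to all other vertices. -/
def IsDomVertex {V : Type*} (G : SimpleGraph V) (v : V) : Prop :=
  ∀ u, u ≠ v → G.Adj v u

/-- `v` is an isolated vertex (degree `0`). -/
def IsIsolatedVertex {V : Type*} (G : SimpleGraph V) (v : V) : Prop :=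
  ∀ u, ¬ G.Adj v u

/-- `v` is a leaf (degree `1`). -/
def IsLeaf {V : Type*} (G : SimpleGraph V) (v : V) : Prop :=
  ∃! u, G.Adj v u

/-- `v` is a strong support vertex: adjacent to at least two leaves. -/
def IsStrongSupport {V : Type*} (G : SimpleGraph V) (v : V) : Prop :=
  ∃ u w, u ≠ w ∧ G.Adj v u ∧ G.Adj v w ∧ IsLeaf G u ∧ IsLeaf G w

/-!
Since `δ(G) ≥ 1`, every closed neighbourhood has at least two vertices, so Staller needs two
moves, and two vertices of hers contain a closed neighbourhood exactly when one is a leaf and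
the other its neighbour.

Two distinct strong support vertices, each taken with its leaves, form disjoint stars, so
Dominator's first move meets at most one of them; Staller takes the centre of the other one,
and Dominator cannot block both of its leaves with one move.

Conversely, Dominator first takes the strong support vertex, if there is one. Whatever vertex `s`
Staller then claims is not a strong support vertex, so at most one vertex completes a
leaf–support pair with `s`, and Dominator takes it.
-/

theorem ENat.sInf_setOf_natCast_eq_natCast_iff {P : ℕ → Prop} {n : ℕ} :
    sInf {k : ℕ∞ | ∃ m : ℕ, k = m ∧ P m} = n ↔ P n ∧ ∀ m < n, ¬ P m := by
  set S := {k : ℕ∞ | ∃ m : ℕ, k = m ∧ P m}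
  have hS : sInf S = n ↔ IsLeast S n := by
    refine ⟨fun h => ?_, IsLeast.csInf_eq⟩
    have hne : S.Nonempty := by
      by_contra hempty
      rw [Set.not_nonempty_iff_eq_empty.mp hempty, sInf_empty] at h
      exact ENat.top_ne_natCast n h
    exact h ▸ isLeast_csInf hne
  simp only [hS, IsLeast, lowerBounds, S, Set.mem_ofPred_eq, Nat.cast_inj, exists_eq_left',
    forall_exists_index, and_imp]
  refine and_congr_right fun _ => ⟨fun h m hm hPm => ?_, fun h k m hkm hPm => ?_⟩
  · exact (h m rfl hPm).not_gt (by exact_mod_cast hm)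
  · exact hkm ▸ Nat.cast_le.mpr (not_lt.mp fun hm => h m hm hPm)

theorem gammaSMB_eq_natCast_iff {V : Type*} [DecidableEq V] {G : SimpleGraph V} {n : ℕ} :
    gammaSMB G = n ↔ StalWinD G ∅ ∅ n ∧ ∀ m < n, ¬ StalWinD G ∅ ∅ m :=
  ENat.sInf_setOf_natCast_eq_natCast_iff

section Leaves

variable {V : Type*} {G : SimpleGraph V}

def leafStar (G : SimpleGraph V) (v : V) : Set V :=
  {d | d = v ∨ G.Adj v d ∧ IsLeaf G d}

theorem IsStrongSupport.not_isLeaf {v : V} (h : IsStrongSupport G v) : ¬ IsLeaf G v := by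
  obtain ⟨u₁, u₂, hne, h₁, h₂, -, -⟩ := h
  exact fun hv => hne (hv.unique h₁ h₂)

theorem eq_of_mem_leafStar {v w d : V} (hv : ¬ IsLeaf G v) (hw : ¬ IsLeaf G w)
    (hdv : d ∈ leafStar G v) (hdw : d ∈ leafStar G w) : v = w := by
  rcases hdv with rfl | ⟨hvd, hd⟩ <;> rcases hdw with rfl | ⟨hwd, hd'⟩
  · rfl
  · exact absurd hd' hv
  · exact absurd hd hw
  · exact hd.unique hvd.symm hwd.symm

theorem not_stallerWon_of_subsingleton (hdelta : ∀ v, ∃ u, G.Adj v u) {S : Finset V}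
    (hS : (S : Set V).Subsingleton) : ¬ StallerWon G S := by
  rintro ⟨x, hx, hN⟩
  obtain ⟨u, hu⟩ := hdelta x
  exact hu.ne (hS hx (hN u hu))

theorem adj_and_isLeaf_of_neighborSet_subset_pair [DecidableEq V] {a b : V}
    (ha : ∃ u, G.Adj a u) (hN : ∀ u, G.Adj a u → u ∈ ({a, b} : Finset V)) :
    G.Adj a b ∧ IsLeaf G a := by
  have hb : ∀ u, G.Adj a u → u = b := fun u hu => by
    simpa [hu.ne'] using hN u hu
  obtain ⟨u, hu⟩ := ha
  obtain rfl := hb u hu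
  exact ⟨hu, u, hu, hb⟩

theorem StallerWon.adj_and_isLeaf_of_pair [DecidableEq V] (hdelta : ∀ v, ∃ u, G.Adj v u)
    {x y : V} (h : StallerWon G {x, y}) : G.Adj x y ∧ (IsLeaf G x ∨ IsLeaf G y) := by
  obtain ⟨a, ha, hN⟩ := h
  rcases Finset.mem_insert.mp ha with rfl | ha
  · obtain ⟨hab, hleaf⟩ := adj_and_isLeaf_of_neighborSet_subset_pair (hdelta a) hN
    exact ⟨hab, Or.inl hleaf⟩
  · obtain rfl := Finset.mem_singleton.mp ha
    rw [Finset.pair_comm] at hN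
    obtain ⟨hab, hleaf⟩ := adj_and_isLeaf_of_neighborSet_subset_pair (hdelta a) hN
    exact ⟨hab.symm, Or.inr hleaf⟩

theorem eq_of_stallerWon_pair [DecidableEq V] (hdelta : ∀ v, ∃ u, G.Adj v u) {s x y : V}
    (hs : ¬ IsStrongSupport G s) (hwx : StallerWon G {x, s}) (hwy : StallerWon G {y, s}) :
    x = y := by
  obtain ⟨hxs, hx | hsx⟩ := hwx.adj_and_isLeaf_of_pair hdelta
  · obtain ⟨hys, hy | hsy⟩ := hwy.adj_and_isLeaf_of_pair hdelta
    · by_contra hxy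
      exact hs ⟨x, y, hxy, hxs.symm, hys.symm, hx, hy⟩
    · exact hsy.unique hxs.symm hys.symm
  · exact hsx.unique hxs.symm (hwy.adj_and_isLeaf_of_pair hdelta).1.symm

end Leaves

section Game

variable {V : Type*} [DecidableEq V] {G : SimpleGraph V}

theorem StalWinS.stallerWon_of_zero {D S : Finset V} (h : StalWinS G D S 0) :
    StallerWon G S := by
  cases h with
  | done _ _ _ hw => exact hw

theorem StalWinD.stallerWon_of_zero {D S : Finset V} (h : StalWinD G D S 0) :
    StallerWon G S := by
  cases h with
  | done _ _ _ hw => exact hw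
  | step _ _ _ hfree hall =>
    obtain ⟨v, hvD, hvS⟩ := hfree
    exact (hall v hvD hvS).stallerWon_of_zero

theorem not_stalWinD_of_lt_two (hdelta : ∀ v, ∃ u, G.Adj v u) {D : Finset V} {k : ℕ}
    (hk : k < 2) : ¬ StalWinD G D ∅ k := by
  have hempty : ¬ StallerWon G ∅ := not_stallerWon_of_subsingleton hdelta (by simp)
  intro h
  interval_cases k
  · exact hempty h.stallerWon_of_zero
  · cases h with
    | done _ _ _ hw => exact hempty hw
    | step _ _ _ hfree hall =>
      obtain ⟨v, hvD, hvS⟩ := hfree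
      cases hall v hvD hvS with
      | done _ _ _ hw => exact hempty hw
      | step _ _ _ w _ _ h' =>
        exact not_stallerWon_of_subsingleton hdelta (by simp) h'.stallerWon_of_zero

theorem stalWinS_one_of_adj_isLeaf {D : Finset V} {s l : V} (hsl : G.Adj s l)
    (hl : IsLeaf G l) (hlD : l ∉ D) : StalWinS G D {s} 1 := by
  refine .step _ _ 0 l hlD (by simpa using hsl.ne') (.done _ _ _ ⟨l, by simp, fun u hu => ?_⟩)
  simp [hl.unique hu hsl.symm]

theorem stalWinS_two_of_adj_isLeaf {D : Finset V} {s l₁ l₂ : V} (hl : l₁ ≠ l₂)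
    (h₁ : G.Adj s l₁) (h₂ : G.Adj s l₂) (hl₁ : IsLeaf G l₁) (hl₂ : IsLeaf G l₂)
    (hsD : s ∉ D) (hl₁D : l₁ ∉ D) (hl₂D : l₂ ∉ D) : StalWinS G D ∅ 2 := by
  refine .step _ _ 1 s hsD (Finset.notMem_empty s)
    (.step _ _ 1 ⟨l₁, hl₁D, by simpa using h₁.ne'⟩ fun d _ _ => ?_)
  by_cases hd : d = l₁
  · exact stalWinS_one_of_adj_isLeaf h₂ hl₂ (by simp [hd, hl.symm, hl₂D])
  · exact stalWinS_one_of_adj_isLeaf h₁ hl₁ (by simp [Ne.symm hd, hl₁D])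

theorem IsStrongSupport.stalWinS_two {D : Finset V} {s : V} (hs : IsStrongSupport G s)
    (hD : ∀ d ∈ D, d ∉ leafStar G s) : StalWinS G D ∅ 2 := by
  obtain ⟨l₁, l₂, hl, h₁, h₂, hl₁, hl₂⟩ := hs
  exact stalWinS_two_of_adj_isLeaf hl h₁ h₂ hl₁ hl₂ (fun h => hD s h (.inl rfl))
    (fun h => hD l₁ h (.inr ⟨h₁, hl₁⟩)) (fun h => hD l₂ h (.inr ⟨h₂, hl₂⟩))

theorem stalWinD_two_of_isStrongSupport {v w : V} (hvw : v ≠ w) (hv : IsStrongSupport G v)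
    (hw : IsStrongSupport G w) : StalWinD G ∅ ∅ 2 := by
  refine .step _ _ _ ⟨v, Finset.notMem_empty v, Finset.notMem_empty v⟩ fun d _ _ => ?_
  by_cases hdv : d ∈ leafStar G v
  · refine hw.stalWinS_two fun x hx hdw => ?_
    obtain rfl := (Finset.mem_insert.mp hx).resolve_right (Finset.notMem_empty x)
    exact hvw (eq_of_mem_leafStar hv.not_isLeaf hw.not_isLeaf hdv hdw)
  · refine hv.stalWinS_two fun x hx => ?_
    rwa [(Finset.mem_insert.mp hx).resolve_right (Finset.notMem_empty x)]

theorem not_stalWinD_one_of_not_isStrongSupport (hdelta : ∀ v, ∃ u, G.Adj v u) {D : Finset V}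
    {s : V} (hs : ¬ IsStrongSupport G s) : ¬ StalWinD G D {s} 1 := by
  have hsingle : ¬ StallerWon G {s} := not_stallerWon_of_subsingleton hdelta (by simp)
  intro h
  cases h with
  | done _ _ _ hw => exact hsingle hw
  | step _ _ _ hfree hall =>
    obtain ⟨d, hdD, hds, hd⟩ : ∃ d, d ∉ D ∧ d ∉ ({s} : Finset V) ∧
        ∀ x, x ∉ D → x ≠ s → StallerWon G {x, s} → x = d := by
      by_cases hc : ∃ c, c ∉ D ∧ c ≠ s ∧ StallerWon G {c, s}
      · obtain ⟨c, hcD, hcs, hc⟩ := hc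
        exact ⟨c, hcD, by simpa using hcs,
          fun x _ _ hx => eq_of_stallerWon_pair hdelta hs hx hc⟩
      · obtain ⟨v, hvD, hvs⟩ := hfree
        exact ⟨v, hvD, hvs, fun x hxD hxs hx => absurd ⟨x, hxD, hxs, hx⟩ hc⟩
    cases hall d hdD hds with
    | done _ _ _ hw => exact hsingle hw
    | step _ _ _ x hxD hxs h' =>
      refine hxD (Finset.mem_insert.mpr (.inl (hd x ?_ ?_ h'.stallerWon_of_zero)))
      · exact fun h => hxD (Finset.mem_insert_of_mem h)
      · simpa using hxs

theorem not_stalWinD_two (hdelta : ∀ v, ∃ u, G.Adj v u) {D : Finset V}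
    (hss : {v | IsStrongSupport G v}.Subsingleton) : ¬ StalWinD G D ∅ 2 := by
  have hempty : ¬ StallerWon G ∅ := not_stallerWon_of_subsingleton hdelta (by simp)
  intro h
  cases h with
  | done _ _ _ hw => exact hempty hw
  | step _ _ _ hfree hall =>
    obtain ⟨d, hdD, hd⟩ :
        ∃ d, d ∉ D ∧ ∀ t, IsStrongSupport G t → t ∈ insert d D := by
      by_cases ht : ∃ t, IsStrongSupport G t ∧ t ∉ D
      · obtain ⟨t, ht, htD⟩ := ht
        exact ⟨t, htD, fun t' ht' => hss ht' ht ▸ Finset.mem_insert_self t D⟩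
      · obtain ⟨v, hvD, -⟩ := hfree
        simp only [not_exists, not_and, not_not] at ht
        exact ⟨v, hvD, fun t ht' => Finset.mem_insert_of_mem (ht t ht')⟩
    cases hall d hdD (Finset.notMem_empty d) with
    | done _ _ _ hw => exact hempty hw
    | step _ _ _ s hsD _ h' =>
      exact not_stalWinD_one_of_not_isStrongSupport hdelta (fun hs => hsD (hd s hs)) h'

end Game

/-- Let `G` be a graph with `δ(G) ≥ 1`.  Then `γ_SMB(G) = 2` if and only if
`G` has at least two strong support vertices. -/
theorem gammaSMB_eq_two_iff {V : Type*} [Fintype V] [DecidableEq V]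
    (G : SimpleGraph V) (hdelta : ∀ v, ∃ u, G.Adj v u) :
    gammaSMB G = 2 ↔
      ∃ v w, v ≠ w ∧ IsStrongSupport G v ∧ IsStrongSupport G w := by
  rw [← Nat.cast_ofNat, gammaSMB_eq_natCast_iff]
  constructor
  · rintro ⟨hwin, -⟩
    by_contra! hss
    exact not_stalWinD_two hdelta (fun a ha b hb => by_contra fun hab => hss a b hab ha hb) hwin
  · rintro ⟨v, w, hvw, hv, hw⟩
    exact ⟨stalWinD_two_of_isStrongSupport hvw hv hw,
      fun m hm => not_stalWinD_of_lt_two hdelta hm⟩
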